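/- For any set S of n ≥ 3 points in general position in the plane, Σ_{k=3}^{n} Σ_{ℓ=0}^{n−3} (−1)^{k+ℓ} Fib(k−ℓ) · X_{k,ℓ}(S) = −Fib(n) + n − binom(n,2), where Fib is the Fibonacci sequence extended to negative indices via Fib(n) = Fib(n−1) + Fib(n−2). -/

import Mathlib

open Finset
open scoped Classical

def GenPos (S : Finset (ℝ × ℝ)) : Prop :=
  ∀ T ⊆ S, T.card = 3 → ¬ Collinear ℝ (T : Set (ℝ × ℝ))

def ConvexPos (T : Finset (ℝ × ℝ)) : Prop :=
  ∀ p ∈ T, p ∉ convexHull ℝ ((T : Set (ℝ × ℝ)) \ {p})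

/-- number of convex k-gons with vertices in S and exactly l points of S inside -/
noncomputable def X (S : Finset (ℝ × ℝ)) (k l : ℕ) : ℕ :=
  ((Finset.powersetCard k S).filter (fun T => ConvexPos T ∧
    (S.filter (fun p => p ∈ interior (convexHull ℝ (T : Set (ℝ × ℝ))))).card = l)).card

/-- number of extreme points (convex hull vertices) of S -/
noncomputable def hullVerts (S : Finset (ℝ × ℝ)) : ℕ :=
  (S.filter (fun p => p ∉ convexHull ℝ ((S : Set (ℝ × ℝ)) \ {p}))).card

/-- Fibonacci numbers extended to all integers via Fib(n) = Fib(n-1) + Fib(n-2) -/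
noncomputable def fibZ (m : ℤ) : ℤ :=
  if 0 ≤ m then Nat.fib m.toNat else (-1) ^ ((-m).toNat + 1) * Nat.fib (-m).toNat

/-!
Every `A ⊆ S` with `|A| ≥ 3` splits uniquely as `T ⊔ J`, where `T` is the vertex set of the convex
hull of `A` and `J` is a set of points of `S` in the interior of the polygon `T`: general position
makes `T` a polygon with at least three vertices and keeps the other points of `A` off its edges.
Hence `∑_{|A| ≥ 3} g |A| = ∑_{k,l} X_{k,l} ∑_{J ⊆ [l]} g (k + |J|)` for every weight `g`. For
`g m = (-1)^m Fib m` the recurrence of `Fib` gives, by induction on `l`, the binomial transform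
`∑_{J ⊆ [l]} g (k + |J|) = (-1)^(k+l) Fib (k - l)`. With `k = 0` the same identity gives
`∑_{A ⊆ S} g |A| = -Fib n`, of which the terms with `|A| ≤ 2` contribute `-n + binom(n, 2)`.
-/

section Fibonacci

lemma fibZ_natCast (n : ℕ) : fibZ n = Nat.fib n := by
  simp [fibZ]

lemma fibZ_neg_natCast (n : ℕ) : fibZ (-n) = (-1) ^ (n + 1) * Nat.fib n := by
  rcases n.eq_zero_or_pos with rfl | _ <;> simp [fibZ]

lemma fibZ_add_two (m : ℤ) : fibZ (m + 2) = fibZ (m + 1) + fibZ m := by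
  obtain ⟨n, rfl | rfl⟩ := Int.eq_nat_or_neg m
  · have h2 : fibZ (n + 2) = Nat.fib (n + 2) := mod_cast fibZ_natCast (n + 2)
    have h1 : fibZ (n + 1) = Nat.fib (n + 1) := mod_cast fibZ_natCast (n + 1)
    rw [h2, h1, fibZ_natCast, Nat.fib_add_two]
    push_cast
    ring
  · match n with
    | 0 => simp [fibZ]
    | 1 => simp [fibZ]
    | j + 2 =>
      rw [show -((j + 2 : ℕ) : ℤ) + 2 = -(j : ℤ) by push_cast; ring,
        show -((j + 2 : ℕ) : ℤ) + 1 = -((j + 1 : ℕ) : ℤ) by push_cast; ring,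
        fibZ_neg_natCast, fibZ_neg_natCast, fibZ_neg_natCast, Nat.fib_add_two]
      push_cast
      ring

lemma sum_powerset_neg_one_pow_mul_fibZ {α : Type*} (I : Finset α) (k : ℕ) :
    ∑ J ∈ I.powerset, (-1 : ℤ) ^ (k + #J) * fibZ ↑(k + #J) =
      (-1) ^ (k + #I) * fibZ (k - #I) := by
  induction I using Finset.induction_on generalizing k with
  | empty => simp
  | insert a I ha ih =>
    have hshift : ∑ J ∈ I.powerset, (-1 : ℤ) ^ (k + #(insert a J)) * fibZ ↑(k + #(insert a J)) =
        (-1) ^ (k + 1 + #I) * fibZ (k + 1 - #I) := by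
      rw [← Nat.cast_succ, ← ih (k + 1)]
      refine sum_congr rfl fun J hJ => ?_
      rw [card_insert_of_notMem fun haJ => ha (mem_powerset.1 hJ haJ), ← add_assoc,
        add_right_comm k]
    have hrec : fibZ (k + 1 - #I) = fibZ (k - #I) + fibZ (k - (#I + 1)) := by
      rw [show (k : ℤ) + 1 - #I = k - (#I + 1) + 2 by ring,
        show (k : ℤ) - #I = k - (#I + 1) + 1 by ring]
      exact fibZ_add_two _
    rw [sum_powerset_insert ha, ih k, hshift, card_insert_of_notMem ha]
    push_cast
    linear_combination -(-1 : ℤ) ^ (k + #I) * hrec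

lemma sum_powerset_three_le_neg_one_pow_mul_fibZ {α : Type*} (S : Finset α) :
    ∑ A ∈ S.powerset with 3 ≤ #A, (-1 : ℤ) ^ #A * fibZ #A = -fibZ #S + #S - (#S).choose 2 := by
  have htotal : ∑ A ∈ S.powerset, (-1 : ℤ) ^ #A * fibZ #A = -fibZ #S := by
    simpa [fibZ_neg_natCast, fibZ_natCast, ← mul_assoc, ← pow_add, pow_succ, ← two_mul, pow_mul]
      using sum_powerset_neg_one_pow_mul_fibZ S 0
  have hsmall : ∑ A ∈ S.powerset with ¬3 ≤ #A, (-1 : ℤ) ^ #A * fibZ #A =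
      -#S + (#S).choose 2 := by
    rw [sum_filter, sum_powerset_apply_card (fun m => if ¬3 ≤ m then (-1) ^ m * fibZ m else 0),
      sum_subset (range_subset_range.2 (by omega : #S + 1 ≤ #S + 3)),
      ← sum_subset (range_subset_range.2 (by omega : 3 ≤ #S + 3))]
    · simp [sum_range_succ, fibZ]
    · intro m _ hm
      simp_all
    · intro m _ hm
      simp [Nat.choose_eq_zero_of_lt (by simpa using hm : #S < m)]
  linear_combination htotal - hsmall + sum_filter_add_sum_filter_not S.powerset (fun A => 3 ≤ #A)
    fun A => (-1 : ℤ) ^ #A * fibZ #A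

end Fibonacci

section ConvexHull

variable {E : Type*} [AddCommGroup E] [Module ℝ E]

lemma mem_convexHull_filter_eq_of_le {B : Finset E} {f : E →ₗ[ℝ] ℝ} {x : E}
    (hB : ∀ b ∈ B, f b ≤ f x) (hx : x ∈ convexHull ℝ (B : Set E)) :
    x ∈ convexHull ℝ (({b ∈ B | f b = f x} : Finset E) : Set E) := by
  obtain ⟨w, hw0, hw1, hwx⟩ := Finset.mem_convexHull'.1 hx
  have hzero : ∀ b ∈ B, w b * (f x - f b) = 0 := by
    refine (sum_eq_zero_iff_of_nonneg fun b hb =>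
      mul_nonneg (hw0 b hb) (sub_nonneg.2 (hB b hb))).1 ?_
    have hfx : ∑ b ∈ B, w b * f b = f x := by
      rw [← hwx, map_sum]
      simp only [map_smul, smul_eq_mul]
    simp only [mul_sub, sum_sub_distrib, ← sum_mul, hw1, hfx, one_mul, sub_self]
  have hsupp : ∀ b ∈ B, w b ≠ 0 → f b = f x := fun b hb hwb =>
    (sub_eq_zero.1 ((mul_eq_zero.1 (hzero b hb)).resolve_left hwb)).symm
  refine Finset.mem_convexHull'.2 ⟨w, fun b hb => hw0 b (mem_filter.1 hb).1, ?_, ?_⟩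
  · rwa [sum_filter_of_ne hsupp]
  · rwa [sum_filter_of_ne fun b hb hb0 => hsupp b hb fun h => hb0 (by rw [h, zero_smul])]

lemma one_lt_card_of_mem_convexHull {B : Finset E} {x : E}
    (hx : x ∈ convexHull ℝ (B : Set E)) (hxB : x ∉ B) : 1 < #B := by
  by_contra h
  obtain ⟨b, hb⟩ : B.Nonempty := by simpa using convexHull_nonempty_iff.1 ⟨x, hx⟩
  have hBb : (B : Set E) ⊆ {b} := fun y hy => card_le_one.1 (not_lt.1 h) y hy b hb
  have hxb := convexHull_mono hBb hx
  rw [convexHull_singleton, Set.mem_singleton_iff] at hxb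
  exact hxB (hxb ▸ hb)

lemma Collinear.subset_convexHull {s t : Set E} (hs : Collinear ℝ s)
    (ht : t ⊆ convexHull ℝ s) : Collinear ℝ t := by
  refine le_trans (Submodule.rank_mono ?_) hs
  calc vectorSpan ℝ t ≤ vectorSpan ℝ (affineSpan ℝ s : Set E) :=
        vectorSpan_mono ℝ (ht.trans (convexHull_subset_affineSpan s))
    _ = vectorSpan ℝ s := direction_affineSpan ℝ s

lemma Finset.collinear_of_card_le_two {B : Finset E} (hB : #B ≤ 2) : Collinear ℝ (B : Set E) := by
  interval_cases h : #B
  · simp [card_eq_zero.1 h, collinear_empty]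
  · obtain ⟨a, rfl⟩ := card_eq_one.1 h
    simp [collinear_singleton]
  · obtain ⟨a, b, -, rfl⟩ := card_eq_two.1 h
    simp [collinear_pair]

variable [FiniteDimensional ℝ E]

lemma collinear_of_forall_apply_eq (hE : Module.finrank ℝ E = 2) {f : Module.Dual ℝ E} (hf : f ≠ 0)
    {s : Set E} {c : ℝ} (hs : ∀ x ∈ s, f x = c) : Collinear ℝ s := by
  have hker : vectorSpan ℝ s ≤ LinearMap.ker f := by
    rw [vectorSpan_def, Submodule.span_le]
    rintro _ ⟨a, ha, b, hb, rfl⟩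
    simp [hs a ha, hs b hb]
  rw [collinear_iff_finrank_le_one]
  have := Module.Dual.finrank_ker_add_one_of_ne_zero hf
  have := Submodule.finrank_mono hker
  omega

lemma affineSpan_eq_top_of_not_collinear (hE : Module.finrank ℝ E = 2) {s : Set E}
    (hs : ¬Collinear ℝ s) : affineSpan ℝ s = ⊤ := by
  have hne : s.Nonempty := Set.nonempty_iff_ne_empty.2 fun h => hs (h ▸ collinear_empty ℝ E)
  rw [AffineSubspace.affineSpan_eq_top_iff_vectorSpan_eq_top_of_nonempty ℝ E E hne]
  rw [collinear_iff_finrank_le_one] at hs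
  have := Submodule.finrank_le (vectorSpan ℝ s)
  exact Submodule.eq_top_of_finrank_eq (by omega)

end ConvexHull

section Vertices

variable {E : Type*} [NormedAddCommGroup E] [NormedSpace ℝ E]

noncomputable def verts (A : Finset E) : Finset E :=
  {p ∈ A | p ∉ convexHull ℝ ((A : Set E) \ {p})}

lemma verts_subset (A : Finset E) : verts A ⊆ A :=
  filter_subset _ _

lemma convexHull_extremePoints_convexHull_finset (A : Finset E) :
    convexHull ℝ ((convexHull ℝ (A : Set E)).extremePoints ℝ) = convexHull ℝ (A : Set E) := by
  have hfin : ((convexHull ℝ (A : Set E)).extremePoints ℝ).Finite :=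
    A.finite_toSet.subset extremePoints_convexHull_subset
  rw [← (hfin.isClosed_convexHull ℝ).closure_eq,
    closure_convexHull_extremePoints (A.finite_toSet.isCompact_convexHull ℝ)
      (convex_convexHull ℝ _)]

lemma coe_verts (A : Finset E) :
    (verts A : Set E) = (convexHull ℝ (A : Set E)).extremePoints ℝ := by
  ext p
  simp only [verts, coe_filter, Set.mem_ofPred_eq]
  constructor
  · rintro ⟨hpA, hp⟩
    by_contra hext
    have hsub : (convexHull ℝ (A : Set E)).extremePoints ℝ ⊆ (A : Set E) \ {p} :=
      fun q hq => ⟨extremePoints_convexHull_subset hq, fun hqp => hext (hqp ▸ hq)⟩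
    have hhull := convexHull_mono (𝕜 := ℝ) hsub
    rw [convexHull_extremePoints_convexHull_finset] at hhull
    exact hp (hhull (subset_convexHull ℝ _ hpA))
  · intro hp
    refine ⟨extremePoints_convexHull_subset hp, fun hmem => ?_⟩
    have := ((convex_convexHull ℝ _).mem_extremePoints_iff_mem_sdiff_convexHull_sdiff.1 hp).2
    exact this (convexHull_mono (Set.sdiff_subset_sdiff_left (subset_convexHull ℝ _)) hmem)

lemma convexHull_verts (A : Finset E) :
    convexHull ℝ (verts A : Set E) = convexHull ℝ (A : Set E) := by
  rw [coe_verts, convexHull_extremePoints_convexHull_finset]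

lemma verts_eq_of_convexHull_eq {A B : Finset E}
    (h : convexHull ℝ (A : Set E) = convexHull ℝ (B : Set E)) : verts A = verts B :=
  coe_injective (by rw [coe_verts, coe_verts, h])

end Vertices

section Plane

noncomputable def interiorPoints (S T : Finset (ℝ × ℝ)) : Finset (ℝ × ℝ) :=
  {p ∈ S | p ∈ interior (convexHull ℝ (T : Set (ℝ × ℝ)))}

noncomputable def convexPolygons (S : Finset (ℝ × ℝ)) : Finset (Finset (ℝ × ℝ)) :=
  {T ∈ S.powerset | ConvexPos T ∧ 3 ≤ #T}

variable {S T A : Finset (ℝ × ℝ)}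

lemma mem_convexPolygons : T ∈ convexPolygons S ↔ T ⊆ S ∧ ConvexPos T ∧ 3 ≤ #T := by
  rw [convexPolygons, mem_filter, mem_powerset]

lemma convexPos_iff_verts_eq : ConvexPos T ↔ verts T = T := by
  rw [verts, filter_eq_self]
  rfl

lemma convexPos_verts (A : Finset (ℝ × ℝ)) : ConvexPos (verts A) :=
  convexPos_iff_verts_eq.2 (verts_eq_of_convexHull_eq (convexHull_verts A))

lemma ConvexPos.verts_union {J : Finset (ℝ × ℝ)} (hT : ConvexPos T)
    (hJ : (J : Set (ℝ × ℝ)) ⊆ convexHull ℝ (T : Set (ℝ × ℝ))) : verts (T ∪ J) = T := by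
  have hhull : convexHull ℝ ((T ∪ J : Finset (ℝ × ℝ)) : Set (ℝ × ℝ)) =
      convexHull ℝ (T : Set (ℝ × ℝ)) := by
    rw [coe_union]
    exact (convexHull_min (Set.union_subset (subset_convexHull ℝ _) hJ)
      (convex_convexHull ℝ _)).antisymm (convexHull_mono Set.subset_union_left)
  rw [verts_eq_of_convexHull_eq hhull, convexPos_iff_verts_eq.1 hT]

lemma ConvexPos.notMem_interior_convexHull (hT : ConvexPos T) {t : ℝ × ℝ} (ht : t ∈ T) :
    t ∉ interior (convexHull ℝ (T : Set (ℝ × ℝ))) := by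
  have hext : t ∈ (convexHull ℝ (T : Set (ℝ × ℝ))).extremePoints ℝ := by
    rw [← coe_verts, convexPos_iff_verts_eq.1 hT]
    exact ht
  exact fun hint => Set.disjoint_left.1 (disjoint_interior_extremePoints _) hint hext

lemma ConvexPos.disjoint_interiorPoints (hT : ConvexPos T) : Disjoint T (interiorPoints S T) :=
  disjoint_left.2 fun _ ht htI => hT.notMem_interior_convexHull ht (mem_filter.1 htI).2

lemma GenPos.not_collinear (hgp : GenPos S) (hAS : A ⊆ S) (hA : 3 ≤ #A) :
    ¬Collinear ℝ (A : Set (ℝ × ℝ)) := by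
  obtain ⟨B, hBA, hB⟩ := exists_subset_card_eq hA
  exact fun hcol => hgp B (hBA.trans hAS) hB (hcol.subset (coe_subset.2 hBA))

lemma GenPos.three_le_card_verts (hgp : GenPos S) (hAS : A ⊆ S) (hA : 3 ≤ #A) :
    3 ≤ #(verts A) := by
  by_contra h
  have hcol : Collinear ℝ (verts A : Set (ℝ × ℝ)) := collinear_of_card_le_two (by omega)
  refine hgp.not_collinear hAS hA (hcol.subset_convexHull ?_)
  rw [convexHull_verts]
  exact subset_convexHull ℝ _

lemma GenPos.mem_interior_convexHull_of_notMem_verts (hgp : GenPos S) (hAS : A ⊆ S) (hA : 3 ≤ #A)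
    {p : ℝ × ℝ} (hp : p ∈ A) (hpv : p ∉ verts A) :
    p ∈ interior (convexHull ℝ (A : Set (ℝ × ℝ))) := by
  have hpA : p ∈ convexHull ℝ ((A.erase p : Finset (ℝ × ℝ)) : Set (ℝ × ℝ)) := by
    simpa [verts, hp, coe_erase] using hpv
  have hint : (interior (convexHull ℝ (A : Set (ℝ × ℝ)))).Nonempty := by
    rw [(convex_convexHull ℝ _).interior_nonempty_iff_affineSpan_eq_top, affineSpan_convexHull]
    exact affineSpan_eq_top_of_not_collinear (by simp) (hgp.not_collinear hAS hA)
  by_contra hpint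
  -- a supporting line through `p`; the points of `A` on it have `p` in their hull
  obtain ⟨f, u, hf0, hfA, hfp⟩ := geometric_hahn_banach_of_nonempty_interior
    (convex_convexHull ℝ _) (convex_singleton p) (Set.disjoint_singleton_right.2 hpint) hint
    (Set.singleton_nonempty p)
  have hle : ∀ b ∈ A.erase p, f b ≤ f p := fun b hb =>
    (hfA b (subset_convexHull ℝ _ (mem_of_mem_erase hb))).trans (hfp p rfl)
  have hpB := mem_convexHull_filter_eq_of_le (f := f.toLinearMap) hle hpA
  obtain ⟨v, hv, w, hw, hvw⟩ := one_lt_card.1 (one_lt_card_of_mem_convexHull hpB (by simp))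
  simp only [mem_filter, mem_erase] at hv hw
  refine hgp.not_collinear (A := {p, v, w}) ?_ (card_eq_three.2 ⟨p, v, w, ?_, ?_, hvw, rfl⟩).ge ?_
  · simp [insert_subset_iff, hAS hp, hAS hv.1.2, hAS hw.1.2]
  · exact hv.1.1.symm
  · exact hw.1.1.symm
  · refine collinear_of_forall_apply_eq (by simp) (f := f.toLinearMap) ?_ (c := f p) ?_
    · exact ContinuousLinearMap.coe_injective.ne hf0
    · simp only [coe_insert, coe_singleton, Set.mem_insert_iff, Set.mem_singleton_iff]
      rintro x (rfl | rfl | rfl)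
      exacts [rfl, hv.2, hw.2]

lemma GenPos.verts_mem_convexPolygons (hgp : GenPos S) (hAS : A ⊆ S) (hA : 3 ≤ #A) :
    verts A ∈ convexPolygons S :=
  mem_convexPolygons.2 ⟨(verts_subset A).trans hAS, convexPos_verts A,
    hgp.three_le_card_verts hAS hA⟩

end Plane

section Counting

variable {S : Finset (ℝ × ℝ)}

lemma GenPos.sum_convexPolygons_sum_powerset_interiorPoints (hgp : GenPos S) {M : Type*}
    [AddCommMonoid M] (g : ℕ → M) :
    ∑ T ∈ convexPolygons S, ∑ J ∈ (interiorPoints S T).powerset, g (#T + #J) =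
      ∑ A ∈ S.powerset with 3 ≤ #A, g #A := by
  rw [← sum_fiberwise_of_maps_to fun A hA =>
    hgp.verts_mem_convexPolygons (mem_powerset.1 (mem_filter.1 hA).1) (mem_filter.1 hA).2]
  refine sum_congr rfl fun T hT => ?_
  obtain ⟨hTS, hT, hT3⟩ := mem_convexPolygons.1 hT
  symm
  refine sum_nbij' (· \ T) (T ∪ ·) ?_ ?_ ?_ ?_ ?_
  · intro A hA
    simp only [mem_filter, mem_powerset] at hA
    obtain ⟨⟨hAS, hA3⟩, rfl⟩ := hA
    refine mem_powerset.2 fun x hx => mem_filter.2 ⟨hAS (sdiff_subset hx), ?_⟩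
    rw [convexHull_verts]
    exact hgp.mem_interior_convexHull_of_notMem_verts hAS hA3 (mem_sdiff.1 hx).1 (mem_sdiff.1 hx).2
  · intro J hJ
    have hJS : J ⊆ interiorPoints S T := mem_powerset.1 hJ
    refine mem_filter.2 ⟨mem_filter.2 ⟨mem_powerset.2 (union_subset hTS
      (hJS.trans (filter_subset _ _))), hT3.trans (card_le_card subset_union_left)⟩, ?_⟩
    exact hT.verts_union fun j hj => interior_subset (mem_filter.1 (hJS hj)).2
  · intro A hA
    exact union_sdiff_of_subset ((mem_filter.1 hA).2 ▸ verts_subset A)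
  · intro J hJ
    exact union_sdiff_cancel_left (hT.disjoint_interiorPoints.mono_right (mem_powerset.1 hJ))
  · intro A hA
    rw [add_comm, card_sdiff_add_card_eq_card ((mem_filter.1 hA).2 ▸ verts_subset A)]

lemma X_eq_card_convexPolygons {k : ℕ} (hk : 3 ≤ k) (l : ℕ) :
    X S k l = #{T ∈ convexPolygons S | (#T, #(interiorPoints S T)) = (k, l)} := by
  simp only [X, convexPolygons, interiorPoints, filter_filter, Prod.mk.injEq]
  congr 1
  ext T
  simp only [mem_filter, mem_powersetCard, mem_powerset]
  constructor
  · rintro ⟨⟨hTS, rfl⟩, hT, hl⟩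
    exact ⟨hTS, ⟨hT, hk⟩, rfl, hl⟩
  · rintro ⟨hTS, ⟨hT, -⟩, rfl, hl⟩
    exact ⟨⟨hTS, rfl⟩, hT, hl⟩

lemma sum_convexPolygons_eq_sum_X (h : ℕ → ℕ → ℤ) :
    ∑ T ∈ convexPolygons S, h #T #(interiorPoints S T) =
      ∑ k ∈ Icc 3 #S, ∑ l ∈ range (#S - 2), h k l * X S k l := by
  have hmaps : ∀ T ∈ convexPolygons S,
      (#T, #(interiorPoints S T)) ∈ Icc 3 #S ×ˢ range (#S - 2) := by
    intro T hT
    obtain ⟨hTS, hT, hT3⟩ := mem_convexPolygons.1 hT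
    have hcard : #T + #(interiorPoints S T) ≤ #S := by
      rw [← card_union_of_disjoint hT.disjoint_interiorPoints]
      exact card_le_card (union_subset hTS (filter_subset _ _))
    simp only [mem_product, mem_Icc, mem_range]
    omega
  rw [← sum_product' (f := fun k l => h k l * X S k l), ← sum_fiberwise_of_maps_to hmaps]
  refine sum_congr rfl fun ⟨k, l⟩ hkl => ?_
  rw [X_eq_card_convexPolygons (mem_Icc.1 (mem_product.1 hkl).1).1, mul_comm, ← nsmul_eq_mul,
    ← sum_const]
  refine sum_congr rfl fun T hT => ?_
  obtain ⟨hk, hl⟩ := Prod.mk.inj (mem_filter.1 hT).2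
  rw [hk, hl]

end Counting

theorem stmt9_general (S : Finset (ℝ × ℝ)) (hgp : GenPos S) :
    ∑ k ∈ Finset.Icc 3 S.card, ∑ l ∈ Finset.range (S.card - 2),
      (-1 : ℤ) ^ (k + l) * fibZ ((k : ℤ) - l) * X S k l =
    -fibZ S.card + S.card - S.card.choose 2 := by
  calc _ = ∑ T ∈ convexPolygons S,
        (-1 : ℤ) ^ (#T + #(interiorPoints S T)) * fibZ (#T - #(interiorPoints S T)) :=
        (sum_convexPolygons_eq_sum_X _).symm
    _ = ∑ T ∈ convexPolygons S, ∑ J ∈ (interiorPoints S T).powerset,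
        (-1 : ℤ) ^ (#T + #J) * fibZ ↑(#T + #J) :=
        sum_congr rfl fun T _ => (sum_powerset_neg_one_pow_mul_fibZ _ _).symm
    _ = ∑ A ∈ S.powerset with 3 ≤ #A, (-1 : ℤ) ^ #A * fibZ #A :=
        hgp.sum_convexPolygons_sum_powerset_interiorPoints fun m => (-1 : ℤ) ^ m * fibZ m
    _ = _ := sum_powerset_three_le_neg_one_pow_mul_fibZ S

theorem stmt9 (S : Finset (ℝ × ℝ)) (hgp : GenPos S) (hn : 3 ≤ S.card) :
    ∑ k ∈ Finset.Icc 3 S.card, ∑ l ∈ Finset.range (S.card - 2),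
      (-1 : ℤ) ^ (k + l) * fibZ ((k : ℤ) - l) * X S k l =
    -fibZ S.card + S.card - S.card.choose 2 :=
  stmt9_general S hgp
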